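/- In the setting of the finite-horizon augmented-state decision problem, if the exogenous information W neither affects the reward nor the state transition — i.e., R(s, a, w) = R̄(s, a) for all w and f^S(s, a, w) = f̄(s, a) for all w — then the optimal value functions coincide: for every step k and state s, E_{W_k}[Ṽ_k*(s, W_k) | S_k = s] = V_k*(s), so the optimal augmented-state policy achieves exactly the same expected total reward as the optimal original policy. -/

import Mathlib

open Finset

/-- Optimal value function of the original problem, where the agent observes only
`S_k`; `k` counts remaining steps, exogenous information at state `s` is
`W = fW s ξ` with i.i.d. noise `ξ ~ p`. -/
noncomputable def Vorig {S A 𝒲 Ξ : Type*} [Fintype Ξ]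
    (R : S → A → 𝒲 → ℝ) (fS : S → A → 𝒲 → S)
    (fW : S → Ξ → 𝒲) (p : Ξ → ℝ) : ℕ → S → ℝ
  | 0, s => ⨆ a : A, ∑ ξ, p ξ * R s a (fW s ξ)
  | n + 1, s => ⨆ a : A,
      ∑ ξ, p ξ * (R s a (fW s ξ) + Vorig R fS fW p n (fS s a (fW s ξ)))

/-- Optimal value function of the augmented problem, where the agent observes
`(S_k, W_k)`. -/
noncomputable def Vaug {S A 𝒲 Ξ : Type*} [Fintype Ξ]
    (R : S → A → 𝒲 → ℝ) (fS : S → A → 𝒲 → S)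
    (fW : S → Ξ → 𝒲) (p : Ξ → ℝ) : ℕ → S → 𝒲 → ℝ
  | 0, s, w => ⨆ a : A, R s a w
  | n + 1, s, w => ⨆ a : A,
      (R s a w + ∑ ξ, p ξ * Vaug R fS fW p n (fS s a w) (fW (fS s a w) ξ))

/-! By induction on the horizon, `Ṽ_k*(s, w)` does not depend on `w` and equals `V_k*(s)`:
once rewards and transitions ignore `w`, each Bellman backup averages, against weights summing
to one, a quantity that no longer depends on the noise. -/

theorem Finset.sum_mul_eq_of_sum_eq_one {ι R : Type*} [NonAssocSemiring R] {s : Finset ι}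
    {p f : ι → R} {c : R} (hp1 : ∑ i ∈ s, p i = 1) (hf : ∀ i ∈ s, f i = c) :
    ∑ i ∈ s, p i * f i = c := by
  rw [Finset.sum_congr rfl fun i hi => by rw [hf i hi], ← Finset.sum_mul, hp1, one_mul]

theorem Vaug_eq_Vorig_of_irrelevant {S A 𝒲 Ξ : Type*} [Fintype Ξ]
    {R : S → A → 𝒲 → ℝ} {fS : S → A → 𝒲 → S} {fW : S → Ξ → 𝒲} {p : Ξ → ℝ}
    (hp1 : ∑ ξ, p ξ = 1) (hR : ∀ s a w w', R s a w = R s a w')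
    (hf : ∀ s a w w', fS s a w = fS s a w') (k : ℕ) (s : S) (w : 𝒲) :
    Vaug R fS fW p k s w = Vorig R fS fW p k s := by
  induction k generalizing s w with
  | zero =>
    refine iSup_congr fun a => (Finset.sum_mul_eq_of_sum_eq_one hp1 fun ξ _ => ?_).symm
    exact hR s a _ w
  | succ n ih =>
    refine iSup_congr fun a => ?_
    have hnext : ∑ ξ, p ξ * Vaug R fS fW p n (fS s a w) (fW (fS s a w) ξ) =
        Vorig R fS fW p n (fS s a w) :=
      Finset.sum_mul_eq_of_sum_eq_one hp1 fun ξ _ => ih _ _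
    rw [hnext]
    refine (Finset.sum_mul_eq_of_sum_eq_one hp1 fun ξ _ => ?_).symm
    rw [hR s a _ w, hf s a _ w]

theorem augmented_value_eq_original_of_irrelevant_general {S A 𝒲 Ξ : Type*}
    [Fintype Ξ]
    (R : S → A → 𝒲 → ℝ) (fS : S → A → 𝒲 → S) (fW : S → Ξ → 𝒲)
    (p : Ξ → ℝ) (hp1 : ∑ ξ, p ξ = 1)
    (hR : ∀ s a w w', R s a w = R s a w')
    (hf : ∀ s a w w', fS s a w = fS s a w') :
    ∀ (k : ℕ) (s : S),
      (∑ ξ, p ξ * Vaug (A := A) R fS fW p k s (fW s ξ)) =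
        Vorig (A := A) R fS fW p k s := fun k s =>
  Finset.sum_mul_eq_of_sum_eq_one hp1 fun ξ _ =>
    Vaug_eq_Vorig_of_irrelevant hp1 hR hf k s (fW s ξ)

/-- Theorem 3 of the paper: if the exogenous information `W`
affects neither the reward nor the state transition, then the optimal value
functions coincide: `E_{W_k}[Ṽ_k*(s, W_k) | S_k = s] = V_k*(s)` for all `k, s`. -/
theorem augmented_value_eq_original_of_irrelevant {S A 𝒲 Ξ : Type*}
    [Fintype Ξ] [Fintype A] [Nonempty A]
    (R : S → A → 𝒲 → ℝ) (fS : S → A → 𝒲 → S) (fW : S → Ξ → 𝒲)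
    (p : Ξ → ℝ) (hp : ∀ ξ, 0 ≤ p ξ) (hp1 : ∑ ξ, p ξ = 1)
    (hR : ∀ s a w w', R s a w = R s a w')
    (hf : ∀ s a w w', fS s a w = fS s a w') :
    ∀ (k : ℕ) (s : S),
      (∑ ξ, p ξ * Vaug (A := A) R fS fW p k s (fW s ξ)) =
        Vorig (A := A) R fS fW p k s :=
  augmented_value_eq_original_of_irrelevant_general R fS fW p hp1 hR hf
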